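/- The rule R_a is sound: if the product of the index domains D y₁ × … × D yₙ equals the singleton {(b₁,…,bₙ)}, then replacing the domain of a[b₁,…,bₙ] by D a[b] ∩ D x preserves the set of solutions of the constraint x = a[y₁,…,yₙ]. -/

import Mathlib

open Finset

/-- `v` is a variable of the array constraint `x = a[y₁,…,yₙ]`. -/
def InCon {V α : Type*} {n : ℕ} (x : V) (y : Fin n → V) (valid : Finset (Fin n → α))
    (a : (Fin n → α) → V) (v : V) : Prop :=
  v = x ∨ (∃ i, v = y i) ∨ ∃ b ∈ valid, v = a b

/-- `σ` is a solution of the array constraint `x = a[y₁,…,yₙ]` with domains `D`: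
it respects the domains of the constraint's variables, the selected index is valid,
and `x` equals the selected array variable. -/
def IsSol {V α : Type*} [DecidableEq α] {n : ℕ} (D : V → Finset α) (x : V) (y : Fin n → V)
    (valid : Finset (Fin n → α)) (a : (Fin n → α) → V) (σ : V → α) : Prop :=
  (∀ v, InCon x y valid a v → σ v ∈ D v) ∧
    (fun i => σ (y i)) ∈ valid ∧ σ x = σ (a fun i => σ (y i))

/-- Linearity: all variables occurring in the constraint are pairwise distinct. -/
def Linear {V α : Type*} {n : ℕ} (x : V) (y : Fin n → V) (valid : Finset (Fin n → α))
    (a : (Fin n → α) → V) : Prop :=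
  Function.Injective y ∧
    (∀ b ∈ valid, ∀ b' ∈ valid, a b = a b' → b = b') ∧
    (∀ i, x ≠ y i) ∧ (∀ b ∈ valid, x ≠ a b) ∧ ∀ i, ∀ b ∈ valid, y i ≠ a b

/-! Once the index domains fix the selected index to `b`, every solution has
`σ (a b) = σ x ∈ D x`, so intersecting the domain of `a b` with `D x` loses no solution;
shrinking domains never creates one. -/

section IsSol

variable {V α : Type*} [DecidableEq α] {n : ℕ} {D D' : V → Finset α} {x : V} {y : Fin n → V}
  {valid : Finset (Fin n → α)} {a : (Fin n → α) → V} {σ : V → α}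

theorem IsSol.mono (h : IsSol D' x y valid a σ) (hle : ∀ v, D' v ⊆ D v) :
    IsSol D x y valid a σ :=
  ⟨fun v hv => hle v (h.1 v hv), h.2⟩

theorem IsSol.index_eq_of_singleton {b : Fin n → α} (h : IsSol D x y valid a σ)
    (hsing : ∀ i, D (y i) = {b i}) : (fun i => σ (y i)) = b := by
  funext i
  simpa [hsing i] using h.1 (y i) (Or.inr (Or.inl ⟨i, rfl⟩))

theorem IsSol.update_inter [DecidableEq V] {w : V} {S : Finset α} (h : IsSol D x y valid a σ)
    (hw : σ w ∈ S) : IsSol (Function.update D w (D w ∩ S)) x y valid a σ := by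
  refine ⟨fun v hv => ?_, h.2⟩
  rcases eq_or_ne v w with rfl | hvw
  · simpa using ⟨h.1 v hv, hw⟩
  · simpa [Function.update_of_ne hvw] using h.1 v hv

end IsSol

theorem stmt4_general {V α : Type*} [DecidableEq V] [DecidableEq α] {n : ℕ}
    (D : V → Finset α) (x : V) (y : Fin n → V) (valid : Finset (Fin n → α))
    (a : (Fin n → α) → V)
    (b : Fin n → α) (hsing : ∀ i, D (y i) = {b i}) :
    ∀ σ : V → α,
      IsSol D x y valid a σ ↔
        IsSol (Function.update D (a b) (D (a b) ∩ D x)) x y valid a σ := by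
  intro σ
  constructor
  · intro h
    have hx : σ x ∈ D x := h.1 x (Or.inl rfl)
    rw [h.2.2, h.index_eq_of_singleton hsing] at hx
    exact h.update_inter hx
  · intro h
    refine h.mono fun v => ?_
    rcases eq_or_ne v (a b) with rfl | hv
    · simp
    · simp [Function.update_of_ne hv]

/-- Soundness of rule R_a: if every index domain `D (y i)` is the singleton `{b i}`
(so the index-domain product is `{b}`), then replacing the domain of `a b` by
`D (a b) ∩ D x` preserves the solution set of the linear constraint `x = a[y₁,…,yₙ]`. -/
theorem stmt4 {V α : Type*} [DecidableEq V] [DecidableEq α] {n : ℕ}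
    (D : V → Finset α) (x : V) (y : Fin n → V) (valid : Finset (Fin n → α))
    (a : (Fin n → α) → V) (hlin : Linear x y valid a)
    (b : Fin n → α) (hb : b ∈ valid) (hsing : ∀ i, D (y i) = {b i}) :
    ∀ σ : V → α,
      IsSol D x y valid a σ ↔
        IsSol (Function.update D (a b) (D (a b) ∩ D x)) x y valid a σ :=
  stmt4_general D x y valid a b hsing
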